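/- Let λ > 0, x_1,...,x_T ∈ R^d and y_1,...,y_T ∈ [-B,B]. Define û_1 = 0 and, for t ≥ 2, û_t = A_t⁻¹ b_{t-1} where A_t = λ I_d + Σ_{s=1}^t x_s x_sᵀ and b_{t-1} = Σ_{s=1}^{t-1} y_s x_s. Then for every u ∈ R^d, Σ_{t=1}^T (y_t - û_t·x_t)² - Σ_{t=1}^T (y_t - u·x_t)² ≤ λ‖u‖² + B² Σ_{k=1}^d log(1 + λ_k(G_T)/λ), where G_T = Σ_{t=1}^T x_t x_tᵀ. -/

import Mathlib

/-!
With `A_t = λI + Σ_{s ≤ t} x_s x_sᵀ` and `b_t = Σ_{s ≤ t} y_s x_s`, the potential `b_tᵀ A_t⁻¹ b_t`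
drops at each round by at least `(y_t - ŷ_t)² - y_t² (1 + x_tᵀ A_t⁻¹ x_t)`, because the rank-one
update `A_t = A_{t-1} + x_t x_tᵀ` gives `bᵀ A_t⁻¹ b + (x_tᵀ A_t⁻¹ b)² ≤ bᵀ A_{t-1}⁻¹ b`.
Telescoping bounds the forecaster's loss by `Σ y_t² - b_Tᵀ A_T⁻¹ b_T + B² Σ x_tᵀ A_t⁻¹ x_t`,
and `Σ y_t² - b_Tᵀ A_T⁻¹ b_T` is the minimum of the ridge objective
`λ‖u‖² + Σ (y_t - u·x_t)²`. Finally `x_tᵀ A_t⁻¹ x_t = 1 - det A_{t-1} / det A_t ≤ log det A_t -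
log det A_{t-1}` (matrix determinant lemma and `1 - 1/z ≤ log z`), so the last sum telescopes to
`log det (λI + G_T) - log det (λI) = Σ_k log (1 + λ_k(G_T)/λ)`.
-/

open Matrix

namespace Finset

theorem sum_Icc_one_le_sub_of_le {M : Type*} [AddCommGroup M] [PartialOrder M]
    [IsOrderedAddMonoid M] {f g : ℕ → M} {T : ℕ}
    (h : ∀ t < T, f (t + 1) ≤ g (t + 1) - g t) :
    ∑ t ∈ Icc 1 T, f t ≤ g T - g 0 := by
  induction T with
  | zero => simp
  | succ T ih =>
    rw [sum_Icc_succ_top (by omega)]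
    calc _ ≤ (g T - g 0) + (g (T + 1) - g T) :=
          add_le_add (ih fun t ht => h t (by omega)) (h T (by omega))
      _ = g (T + 1) - g 0 := by abel

end Finset

namespace Matrix

variable {n : Type*} [Fintype n]

theorem vecMulVec_self_mulVec {R : Type*} [CommSemiring R] (x v : n → R) :
    vecMulVec x x *ᵥ v = (x ⬝ᵥ v) • x := by
  simp [vecMulVec_mulVec]

theorem posSemidef_vecMulVec_self (x : n → ℝ) : (vecMulVec x x).PosSemidef := by
  simpa using posSemidef_vecMulVec_self_star x

theorem IsHermitian.dotProduct_mulVec_comm {M : Matrix n n ℝ} (hM : M.IsHermitian)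
    (a c : n → ℝ) : a ⬝ᵥ (M *ᵥ c) = (M *ᵥ a) ⬝ᵥ c := by
  rw [dotProduct_mulVec, ← mulVec_transpose, show Mᵀ = M from hM]

theorem PosDef.add_vecMulVec_self {M : Matrix n n ℝ} (hM : M.PosDef) (x : n → ℝ) :
    (M + vecMulVec x x).PosDef :=
  hM.add_posSemidef (posSemidef_vecMulVec_self x)

variable [DecidableEq n]

theorem mulVec_inv_mulVec {R : Type*} [CommRing R] {M : Matrix n n R} (hM : IsUnit M.det)
    (v : n → R) :
    M *ᵥ (M⁻¹ *ᵥ v) = v := by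
  rw [mulVec_mulVec, mul_nonsing_inv _ hM, one_mulVec]

theorem IsHermitian.det_smul_one_add {G : Matrix n n ℝ} (hG : G.IsHermitian) (c : ℝ) :
    (c • 1 + G).det = ∏ k, (c + hG.eigenvalues k) := by
  conv_lhs => rw [hG.spectral_theorem, ← Algebra.algebraMap_eq_smul_one,
    ← AlgHomClass.commutes (Unitary.conjStarAlgAut ℝ _ hG.eigenvectorUnitary) c, ← map_add]
  simp [-Unitary.conjStarAlgAut_apply, algebraMap_eq_diagonal, diagonal_add]

theorem PosSemidef.log_det_smul_one_add_sub {G : Matrix n n ℝ} (hG : G.PosSemidef)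
    {c : ℝ} (hc : 0 < c) :
    Real.log (c • 1 + G).det - Real.log (c • 1 : Matrix n n ℝ).det =
      ∑ k, Real.log (1 + hG.isHermitian.eigenvalues k / c) := by
  have hpos : ∀ k, 0 < 1 + hG.isHermitian.eigenvalues k / c := fun k => by
    have := hG.eigenvalues_nonneg k
    positivity
  have hfactor : ∀ k, c + hG.isHermitian.eigenvalues k =
      c * (1 + hG.isHermitian.eigenvalues k / c) := fun k => by field_simp
  rw [hG.isHermitian.det_smul_one_add, det_smul, det_one, mul_one, Finset.prod_congr rfl
    fun k _ => hfactor k, Finset.prod_mul_distrib, Finset.prod_const, Finset.card_univ,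
    Real.log_mul (by positivity) (Finset.prod_ne_zero_iff.mpr fun k _ => (hpos k).ne'),
    Real.log_prod fun k _ => (hpos k).ne']
  ring

namespace PosDef

variable {M : Matrix n n ℝ}

theorem two_mul_dotProduct_sub_le (hM : M.PosDef) (b v : n → ℝ) :
    2 * (b ⬝ᵥ v) - v ⬝ᵥ (M *ᵥ v) ≤ b ⬝ᵥ (M⁻¹ *ᵥ b) := by
  set w := M⁻¹ *ᵥ b
  have hMw : M *ᵥ w = b := mulVec_inv_mulVec hM.det_pos.ne'.isUnit b
  have h := hM.posSemidef.dotProduct_mulVec_nonneg (v - w)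
  rw [star_trivial, mulVec_sub, hMw, dotProduct_sub, sub_dotProduct, sub_dotProduct,
    hM.isHermitian.dotProduct_mulVec_comm w v, hMw, dotProduct_comm w b,
    dotProduct_comm v b] at h
  linarith

theorem dotProduct_inv_mulVec_add_sq_le (hM : M.PosDef) (x b : n → ℝ) :
    b ⬝ᵥ ((M + vecMulVec x x)⁻¹ *ᵥ b) + (x ⬝ᵥ ((M + vecMulVec x x)⁻¹ *ᵥ b)) ^ 2 ≤
      b ⬝ᵥ (M⁻¹ *ᵥ b) := by
  set N := M + vecMulVec x x
  set w := N⁻¹ *ᵥ b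
  have hNw : M *ᵥ w + (x ⬝ᵥ w) • x = b := by
    rw [← vecMulVec_self_mulVec, ← add_mulVec]
    exact mulVec_inv_mulVec (hM.add_vecMulVec_self x).det_pos.ne'.isUnit b
  have h := hM.two_mul_dotProduct_sub_le b w
  have hwMw : w ⬝ᵥ (M *ᵥ w) = b ⬝ᵥ w - (x ⬝ᵥ w) ^ 2 := by
    rw [← hNw, add_dotProduct, smul_dotProduct, smul_eq_mul, dotProduct_comm (M *ᵥ w),
      dotProduct_comm x w]
    ring
  linarith

theorem sq_sub_forecast_le (hM : M.PosDef) (x b : n → ℝ) (y : ℝ) :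
    (y - ((M + vecMulVec x x)⁻¹ *ᵥ b) ⬝ᵥ x) ^ 2 -
        y ^ 2 * (1 + x ⬝ᵥ ((M + vecMulVec x x)⁻¹ *ᵥ x)) ≤
      b ⬝ᵥ (M⁻¹ *ᵥ b) - (b + y • x) ⬝ᵥ ((M + vecMulVec x x)⁻¹ *ᵥ (b + y • x)) := by
  set N := M + vecMulVec x x
  have hN : N⁻¹.IsHermitian := (hM.add_vecMulVec_self x).isHermitian.inv
  have hexpand : (b + y • x) ⬝ᵥ (N⁻¹ *ᵥ (b + y • x)) = b ⬝ᵥ (N⁻¹ *ᵥ b) +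
      2 * y * ((N⁻¹ *ᵥ b) ⬝ᵥ x) + y ^ 2 * (x ⬝ᵥ (N⁻¹ *ᵥ x)) := by
    simp only [mulVec_add, mulVec_smul, add_dotProduct, dotProduct_add, smul_dotProduct,
      dotProduct_smul, smul_eq_mul, hN.dotProduct_mulVec_comm b x, dotProduct_comm x (N⁻¹ *ᵥ b)]
    ring
  have h := hM.dotProduct_inv_mulVec_add_sq_le x b
  rw [dotProduct_comm x] at h
  rw [hexpand]
  nlinarith

theorem dotProduct_inv_mulVec_le_log_det_sub (hM : M.PosDef) (x : n → ℝ) :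
    x ⬝ᵥ ((M + vecMulVec x x)⁻¹ *ᵥ x) ≤
      Real.log (M + vecMulVec x x).det - Real.log M.det := by
  set N := M + vecMulVec x x
  have hN := hM.add_vecMulVec_self x
  set s := x ⬝ᵥ (N⁻¹ *ᵥ x)
  have hdet : M.det = N.det * (1 - s) := by
    have : M = N + replicateCol Unit (-x) * replicateRow Unit x := by
      rw [← vecMulVec_eq, neg_vecMulVec]
      simp [N]
    rw [this, det_add_replicateCol_mul_replicateRow hN.det_pos.ne'.isUnit,
      det_unique (n := Unit), Matrix.mul_assoc, ← replicateCol_mulVec]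
    simp [s, N, sub_eq_add_neg, mulVec_neg]
  have hs : 0 < 1 - s := by
    have h := hM.det_pos
    rw [hdet] at h
    exact (mul_pos_iff_of_pos_left hN.det_pos).mp h
  have hlog : Real.log N.det - Real.log M.det = - Real.log (1 - s) := by
    rw [hdet, Real.log_mul hN.det_pos.ne' hs.ne']
    ring
  rw [hlog]
  linarith [Real.log_le_sub_one_of_pos hs]

end PosDef

end Matrix

section RankOneUpdates

variable {n : Type*} [Fintype n] {A : ℕ → Matrix n n ℝ} {x : ℕ → n → ℝ}

theorem posDef_of_succ_eq_add_vecMulVec (hA0 : (A 0).PosDef)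
    (hA : ∀ t, A (t + 1) = A t + vecMulVec (x (t + 1)) (x (t + 1))) (t : ℕ) : (A t).PosDef := by
  induction t with
  | zero => exact hA0
  | succ t ih => exact hA t ▸ ih.add_vecMulVec_self (x (t + 1))

variable [DecidableEq n]

theorem sum_dotProduct_inv_mulVec_le_log_det_sub (hA0 : (A 0).PosDef)
    (hA : ∀ t, A (t + 1) = A t + vecMulVec (x (t + 1)) (x (t + 1))) (T : ℕ) :
    ∑ t ∈ Finset.Icc 1 T, x t ⬝ᵥ ((A t)⁻¹ *ᵥ x t) ≤
      Real.log (A T).det - Real.log (A 0).det :=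
  Finset.sum_Icc_one_le_sub_of_le (f := fun t => x t ⬝ᵥ ((A t)⁻¹ *ᵥ x t))
    (g := fun t => Real.log (A t).det) fun t _ => hA t ▸
    (posDef_of_succ_eq_add_vecMulVec hA0 hA t).dotProduct_inv_mulVec_le_log_det_sub (x (t + 1))

theorem sum_sq_sub_forecast_le (hA0 : (A 0).PosDef)
    (hA : ∀ t, A (t + 1) = A t + vecMulVec (x (t + 1)) (x (t + 1)))
    {y : ℕ → ℝ} {b : ℕ → n → ℝ} (hb0 : b 0 = 0)
    (hb : ∀ t, b (t + 1) = b t + y (t + 1) • x (t + 1))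
    {B : ℝ} {T : ℕ} (hy : ∀ t ∈ Finset.Icc 1 T, |y t| ≤ B) :
    ∑ t ∈ Finset.Icc 1 T, (y t - ((A t)⁻¹ *ᵥ b (t - 1)) ⬝ᵥ x t) ^ 2 ≤
      ∑ t ∈ Finset.Icc 1 T, y t ^ 2 - b T ⬝ᵥ ((A T)⁻¹ *ᵥ b T) +
        B ^ 2 * ∑ t ∈ Finset.Icc 1 T, x t ⬝ᵥ ((A t)⁻¹ *ᵥ x t) := by
  have htelescope := Finset.sum_Icc_one_le_sub_of_le
    (f := fun t => (y t - ((A t)⁻¹ *ᵥ b (t - 1)) ⬝ᵥ x t) ^ 2 - y t ^ 2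
      - B ^ 2 * (x t ⬝ᵥ ((A t)⁻¹ *ᵥ x t)))
    (g := fun t => -(b t ⬝ᵥ ((A t)⁻¹ *ᵥ b t))) (T := T) fun t ht => by
      have hstep := (posDef_of_succ_eq_add_vecMulVec hA0 hA t).sq_sub_forecast_le
        (x (t + 1)) (b t) (y (t + 1))
      obtain ⟨hlo, hhi⟩ := abs_le.mp (hy (t + 1) (Finset.mem_Icc.mpr ⟨by omega, by omega⟩))
      have hyB : y (t + 1) ^ 2 ≤ B ^ 2 := sq_le_sq' hlo hhi
      have hq : 0 ≤ x (t + 1) ⬝ᵥ ((A (t + 1))⁻¹ *ᵥ x (t + 1)) := by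
        simpa using (posDef_of_succ_eq_add_vecMulVec hA0 hA (t + 1)).inv.posSemidef
          |>.dotProduct_mulVec_nonneg (x (t + 1))
      rw [← hA, ← hb] at hstep
      simp only [Nat.add_sub_cancel]
      linarith [mul_le_mul_of_nonneg_right hyB hq]
  simp only [Finset.sum_sub_distrib, ← Finset.mul_sum, hb0, zero_dotProduct, neg_zero,
    sub_zero] at htelescope
  linarith

end RankOneUpdates

theorem sum_sq_sub_dotProduct_inv_mulVec_le {n ι : Type*} [Fintype n] [DecidableEq n]
    {lam : ℝ} (hlam : 0 < lam) (s : Finset ι) (x : ι → n → ℝ) (y : ι → ℝ) (u : n → ℝ) :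
    ∑ t ∈ s, y t ^ 2 - (∑ t ∈ s, y t • x t) ⬝ᵥ
        ((lam • 1 + ∑ t ∈ s, vecMulVec (x t) (x t))⁻¹ *ᵥ ∑ t ∈ s, y t • x t) ≤
      lam * ∑ i, u i ^ 2 + ∑ t ∈ s, (y t - u ⬝ᵥ x t) ^ 2 := by
  have hpos : (lam • 1 + ∑ t ∈ s, vecMulVec (x t) (x t)).PosDef :=
    (PosDef.one.smul hlam).add_posSemidef
      (posSemidef_sum s fun t _ => posSemidef_vecMulVec_self (x t))
  have h := hpos.two_mul_dotProduct_sub_le (∑ t ∈ s, y t • x t) u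
  have hquad : u ⬝ᵥ ((lam • 1 + ∑ t ∈ s, vecMulVec (x t) (x t)) *ᵥ u) =
      lam * ∑ i, u i ^ 2 + ∑ t ∈ s, (u ⬝ᵥ x t) ^ 2 := by
    simp only [add_mulVec, smul_mulVec, one_mulVec, sum_mulVec, dotProduct_add, dotProduct_smul,
      dotProduct_sum, vecMulVec_self_mulVec, smul_eq_mul, dotProduct_comm (x _) u]
    simp [dotProduct, sq]
  have hlin : (∑ t ∈ s, y t • x t) ⬝ᵥ u = ∑ t ∈ s, y t * (u ⬝ᵥ x t) := by
    simp [dotProduct_sum, dotProduct_comm]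
  have hsq : ∑ t ∈ s, (y t - u ⬝ᵥ x t) ^ 2 =
      ∑ t ∈ s, y t ^ 2 - 2 * ∑ t ∈ s, y t * (u ⬝ᵥ x t) + ∑ t ∈ s, (u ⬝ᵥ x t) ^ 2 := by
    simp only [sub_sq, Finset.sum_add_distrib, Finset.sum_sub_distrib, Finset.mul_sum]
    ring_nf
  rw [hquad, hlin] at h
  linarith

/-- Regret bound for the Vovk–Azoury–Warmuth non-linear ridge regression
forecaster: for every comparison vector `u`,
`Σ_t (y_t - û_t·x_t)² - Σ_t (y_t - u·x_t)² ≤ λ‖u‖² + B² Σ_k log(1 + λ_k(G_T)/λ)`. -/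
theorem stmt16 {d : ℕ} (T : ℕ) (lam B : ℝ) (hlam : 0 < lam)
    (x : ℕ → (Fin d → ℝ)) (y : ℕ → ℝ) (hy : ∀ t ∈ Finset.Icc 1 T, |y t| ≤ B)
    (A : ℕ → Matrix (Fin d) (Fin d) ℝ)
    (hA : ∀ t, A t = lam • 1 + ∑ s ∈ Finset.Icc 1 t, Matrix.vecMulVec (x s) (x s))
    (b : ℕ → Fin d → ℝ) (hb : ∀ t, b t = ∑ s ∈ Finset.Icc 1 t, y s • x s)
    (uhat : ℕ → Fin d → ℝ) (hu : ∀ t, uhat t = (A t)⁻¹ *ᵥ b (t - 1))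
    (hG : (∑ s ∈ Finset.Icc 1 T, Matrix.vecMulVec (x s) (x s)).IsHermitian)
    (u : Fin d → ℝ) :
    ∑ t ∈ Finset.Icc 1 T, (y t - uhat t ⬝ᵥ x t) ^ 2 -
        ∑ t ∈ Finset.Icc 1 T, (y t - u ⬝ᵥ x t) ^ 2 ≤
      lam * ∑ i, u i ^ 2 +
        B ^ 2 * ∑ k : Fin d, Real.log (1 + hG.eigenvalues k / lam) := by
  have hA0 : A 0 = lam • 1 := by simp [hA 0]
  have hAsucc : ∀ t, A (t + 1) = A t + vecMulVec (x (t + 1)) (x (t + 1)) := fun t => by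
    rw [hA, hA, Finset.sum_Icc_succ_top (by omega), add_assoc]
  have hbsucc : ∀ t, b (t + 1) = b t + y (t + 1) • x (t + 1) := fun t => by
    rw [hb, hb, Finset.sum_Icc_succ_top (by omega)]
  have hpos : (A 0).PosDef := hA0 ▸ PosDef.one.smul hlam
  have hforecast := sum_sq_sub_forecast_le hpos hAsucc (by simp [hb 0]) hbsucc hy
  have hridge := sum_sq_sub_dotProduct_inv_mulVec_le hlam (Finset.Icc 1 T) x y u
  have hpotential : ∑ t ∈ Finset.Icc 1 T, x t ⬝ᵥ ((A t)⁻¹ *ᵥ x t) ≤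
      ∑ k, Real.log (1 + hG.eigenvalues k / lam) :=
    (sum_dotProduct_inv_mulVec_le_log_det_sub hpos hAsucc T).trans_eq <| by
      rw [hA T, hA0]
      exact (posSemidef_sum _ fun s _ => posSemidef_vecMulVec_self (x s)).log_det_smul_one_add_sub
        hlam
  rw [← hA, ← hb] at hridge
  simp only [hu]
  linarith [mul_le_mul_of_nonneg_left hpotential (sq_nonneg B)]
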